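/- arXiv:2506.10788 — 3 statements merged into one kernel-verified Lean document; each statement's English description precedes it below -/
import Mathlib

section
/- For every real number a, every natural number N ≥ 1, and every real parameter b with b > 2·N·π + |a| + 1, the equation z = a + b·sin(z) − sin(z²) has at least 2N distinct real solutions z. -/
/-!
At the crests `z = kπ + π/2` of `sin` we have `|sin z| = 1`, and as long as `|z| + |a| + 1 < b`
the term `b sin z` dominates `a - sin (z²) - z`, so the residual `a + b sin z - sin (z²) - z`
has the sign of `sin z`. Consecutive crests therefore carry residuals of opposite signs, and the
intermediate value theorem gives a solution between any two of them; the `2N + 1` crests with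
`|k| ≤ N` bound `2N` disjoint intervals.
-/

open Real Set

theorem exists_mem_Ioo_eq_zero_of_mul_neg {f : ℝ → ℝ} {a b : ℝ} (hab : a ≤ b)
    (hf : ContinuousOn f (Icc a b)) (hsign : f a * f b < 0) : ∃ z ∈ Ioo a b, f z = 0 := by
  rcases mul_neg_iff.mp hsign with ⟨ha, hb⟩ | ⟨ha, hb⟩
  · exact intermediate_value_Ioo' hab hf ⟨hb, ha⟩
  · exact intermediate_value_Ioo hab hf ⟨ha, hb⟩

theorem exists_finset_zeros_of_mul_neg {f : ℝ → ℝ} (hf : Continuous f) {x : ℤ → ℝ}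
    (hx : StrictMono x) {m n : ℤ} (hsign : ∀ k ∈ Finset.Ico m n, f (x k) * f (x (k + 1)) < 0) :
    ∃ S : Finset ℝ, (n - m).toNat ≤ S.card ∧ ∀ z ∈ S, f z = 0 := by
  have hroot : ∀ k ∈ Finset.Ico m n, ∃ z ∈ Ioo (x k) (x (k + 1)), f z = 0 := fun k hk =>
    exists_mem_Ioo_eq_zero_of_mul_neg (hx (lt_add_one k)).le hf.continuousOn (hsign k hk)
  choose! r hr_mem hr_zero using hroot
  have hr_mono : StrictMonoOn r (Finset.Ico m n) := fun i hi j hj hij =>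
    calc r i < x (i + 1) := (hr_mem i hi).2
      _ ≤ x j := hx.monotone (Int.add_one_le_of_lt hij)
      _ < r j := (hr_mem j hj).1
  refine ⟨(Finset.Ico m n).image r, ?_, ?_⟩
  · rw [Finset.card_image_of_injOn hr_mono.injOn, Int.card_Ico]
  · simp only [Finset.mem_image]
    rintro _ ⟨k, hk, rfl⟩
    exact hr_zero k hk

theorem abs_sin_int_mul_pi_add_pi_div_two (k : ℤ) : |sin (k * π + π / 2)| = 1 := by
  rw [sin_add_pi_div_two, cos_int_mul_pi, abs_neg_one_zpow]

theorem abs_int_mul_pi_add_pi_div_two_le {n : ℕ} {k : ℤ} (hk : |k| ≤ n) :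
    |k * π + π / 2| ≤ n * π + π / 2 := by
  have hk' : |(k : ℝ)| ≤ n := by exact_mod_cast hk
  calc |k * π + π / 2| ≤ |(k : ℝ)| * π + π / 2 := by
        grw [abs_add_le, abs_mul, abs_of_pos pi_pos, abs_of_pos (half_pos pi_pos)]
    _ ≤ n * π + π / 2 := by gcongr

theorem strictMono_int_mul_pi_add_pi_div_two : StrictMono fun k : ℤ => k * π + π / 2 :=
  fun i j hij => by simp only; gcongr

noncomputable def fixedPointResidual (a b z : ℝ) : ℝ := a + b * sin z - sin (z ^ 2) - z

theorem continuous_fixedPointResidual (a b : ℝ) : Continuous (fixedPointResidual a b) := by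
  unfold fixedPointResidual; fun_prop

theorem sin_mul_fixedPointResidual_pos {a b z : ℝ} (hz : |sin z| = 1)
    (hb : |z| + |a| + 1 < b) : 0 < sin z * fixedPointResidual a b z := by
  have hsq : sin z * sin z = 1 := by rw [← abs_mul_abs_self, hz, one_mul]
  have hrest : |a - sin (z ^ 2) - z| ≤ |a| + 1 + |z| := by
    linarith [abs_sub (a - sin (z ^ 2)) z, abs_sub a (sin (z ^ 2)), abs_sin_le_one (z ^ 2)]
  have hlower : -|a - sin (z ^ 2) - z| ≤ sin z * (a - sin (z ^ 2) - z) := by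
    simpa only [abs_mul, hz, one_mul] using neg_abs_le (sin z * (a - sin (z ^ 2) - z))
  calc 0 < b * (sin z * sin z) - |a - sin (z ^ 2) - z| := by rw [hsq]; linarith
    _ ≤ b * (sin z * sin z) + sin z * (a - sin (z ^ 2) - z) := by linarith
    _ = sin z * fixedPointResidual a b z := by unfold fixedPointResidual; ring

theorem fixedPointResidual_mul_fixedPointResidual_add_pi_neg {a b z : ℝ} (hz : |sin z| = 1)
    (hb : |z| + |a| + 1 < b) (hb' : |z + π| + |a| + 1 < b) :
    fixedPointResidual a b z * fixedPointResidual a b (z + π) < 0 := by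
  have hz' : |sin (z + π)| = 1 := by rwa [sin_add_pi, abs_neg]
  have h := mul_pos (sin_mul_fixedPointResidual_pos hz hb) (sin_mul_fixedPointResidual_pos hz' hb')
  rw [sin_add_pi] at h
  have hsq : sin z * sin z = 1 := by rw [← abs_mul_abs_self, hz, one_mul]
  nlinarith

theorem fixedPointResidual_mul_neg_of_mem_Ico {a b : ℝ} {N : ℕ}
    (hb : 2 * N * π + |a| + 1 < b) {k : ℤ} (hk : k ∈ Finset.Ico (-N : ℤ) N) :
    fixedPointResidual a b (k * π + π / 2) *
      fixedPointResidual a b (((k + 1 : ℤ) : ℝ) * π + π / 2) < 0 := by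
  obtain ⟨hk₁, hk₂⟩ := Finset.mem_Ico.mp hk
  have hN : π / 2 ≤ N * π := by
    have : (1 : ℝ) ≤ N := by exact_mod_cast (by omega : 1 ≤ N)
    nlinarith [pi_pos]
  have hbound : ∀ j : ℤ, |j| ≤ N → |j * π + π / 2| + |a| + 1 < b := fun j hj => by
    linarith [abs_int_mul_pi_add_pi_div_two_le hj]
  have h₀ := hbound k (abs_le.mpr ⟨hk₁, hk₂.le⟩)
  have h₁ := hbound (k + 1) (abs_le.mpr ⟨by omega, hk₂⟩)
  have hshift : ((k + 1 : ℤ) : ℝ) * π + π / 2 = k * π + π / 2 + π := by push_cast; ring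
  rw [hshift] at h₁ ⊢
  exact fixedPointResidual_mul_fixedPointResidual_add_pi_neg
    (abs_sin_int_mul_pi_add_pi_div_two k) h₀ h₁

theorem fixed_point_equation_has_at_least_two_N_solutions_general
    (a : ℝ) (N : ℕ) (b : ℝ)
    (hb : b > 2 * N * Real.pi + |a| + 1) :
    ∃ S : Finset ℝ, 2 * N ≤ S.card ∧
      ∀ z ∈ S, z = a + b * Real.sin z - Real.sin (z ^ 2) := by
  obtain ⟨S, hcard, hzero⟩ := exists_finset_zeros_of_mul_neg (continuous_fixedPointResidual a b)
    strictMono_int_mul_pi_add_pi_div_two fun _ => fixedPointResidual_mul_neg_of_mem_Ico hb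
  refine ⟨S, by omega, fun z hz => ?_⟩
  have hres := hzero z hz
  unfold fixedPointResidual at hres
  linarith

/-- For every real number `a`, every natural number `N ≥ 1`, and every real
parameter `b` with `b > 2·N·π + |a| + 1`, the equation `z = a + b·sin(z) − sin(z²)` has at
least `2N` distinct real solutions `z`. -/
theorem fixed_point_equation_has_at_least_two_N_solutions
    (a : ℝ) (N : ℕ) (hN : 1 ≤ N) (b : ℝ)
    (hb : b > 2 * N * Real.pi + |a| + 1) :
    ∃ S : Finset ℝ, 2 * N ≤ S.card ∧
      ∀ z ∈ S, z = a + b * Real.sin z - Real.sin (z ^ 2) :=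
  fixed_point_equation_has_at_least_two_N_solutions_general a N b hb
end

section
/- For every real number a and every natural number M, there exists a real number b₀ such that for all b > b₀ the equation z = a + b·sin(z) − sin(z²) has at least M distinct real solutions; consequently the number of real solutions of this equation grows without bound as b increases. -/
/-!
On the arch `[2πk - π/2, 2πk + π/2]` the sine runs from `-1` to `1`, so once `b` exceeds
`|a| + 1 + |z|` on it, `z - a - b sin z + sin (z²)` goes from positive to negative and the
intermediate value theorem gives a solution on that arch. The first `M` arches are pairwise
disjoint, so their solutions are distinct.
-/

open Real Set Finset Function

theorem exists_mem_Icc_eq_mul_sin_add {φ : ℝ → ℝ} {p q b : ℝ}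
    (hφ : ContinuousOn φ (Icc p q)) (hpq : p ≤ q) (hp : sin p = -1) (hq : sin q = 1)
    (hbp : φ p - p ≤ b) (hbq : q - φ q ≤ b) :
    ∃ z ∈ Icc p q, z = b * sin z + φ z := by
  have hcont : ContinuousOn (fun z => z - b * sin z - φ z) (Icc p q) := by fun_prop
  have hsign : (0 : ℝ) ∈ Icc (q - b * sin q - φ q) (p - b * sin p - φ p) := by
    rw [hp, hq]
    constructor <;> linarith
  obtain ⟨z, hz, hz0⟩ := intermediate_value_Icc' hpq hcont hsign
  exact ⟨z, hz, by linarith [hz0]⟩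

theorem eq_of_mem_Icc_add_mul {c c' d x : ℝ} {j k : ℕ} (hd : c' - c < d)
    (hj : x ∈ Icc (c + j * d) (c' + j * d)) (hk : x ∈ Icc (c + k * d) (c' + k * d)) :
    j = k := by
  have hd_pos : 0 < d := by linarith [hj.1.trans hj.2]
  have lt_succ {m n : ℕ} (hm : x ∈ Icc (c + m * d) (c' + m * d))
      (hn : x ∈ Icc (c + n * d) (c' + n * d)) : m < n + 1 := by
    have : (m : ℝ) * d < (n + 1) * d := by linarith [hm.1, hn.2]
    exact_mod_cast lt_of_mul_lt_mul_right this hd_pos.le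
  have := lt_succ hj hk
  have := lt_succ hk hj
  omega

/-- For every real number `a` and every natural number `M`, there exists a real
number `b₀` such that for all `b > b₀` the equation `z = a + b·sin(z) − sin(z²)` has at least
`M` distinct real solutions; consequently the number of real solutions grows without bound as
`b` increases. -/
theorem fixed_point_equation_solutions_grow_without_bound
    (a : ℝ) (M : ℕ) :
    ∃ b₀ : ℝ, ∀ b : ℝ, b > b₀ →
      ∃ S : Finset ℝ, M ≤ S.card ∧
        ∀ z ∈ S, z = a + b * Real.sin z - Real.sin (z ^ 2) := by
  refine ⟨|a| + 1 + π / 2 + M * (2 * π), fun b hb => ?_⟩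
  have root_on_arch : ∀ k : Fin M,
      ∃ z ∈ Icc (-(π / 2) + k * (2 * π)) (π / 2 + k * (2 * π)),
        z = a + b * sin z - sin (z ^ 2) := by
    intro k
    set p := -(π / 2) + k * (2 * π) with hp_def
    set q := π / 2 + k * (2 * π) with hq_def
    have hp : sin p = -1 := by rw [sin_add_nat_mul_two_pi, sin_neg, sin_pi_div_two]
    have hq : sin q = 1 := by rw [sin_add_nat_mul_two_pi, sin_pi_div_two]
    have hk : (k : ℝ) * (2 * π) ≤ M * (2 * π) := by gcongr; exact_mod_cast k.isLt.le
    have hk₀ : 0 ≤ (k : ℝ) * (2 * π) := by positivity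
    obtain ⟨z, hz, hz_eq⟩ := exists_mem_Icc_eq_mul_sin_add (φ := fun z => a - sin (z ^ 2))
      (b := b) (by fun_prop) (by linarith [pi_pos]) hp hq
      (by linarith [le_abs_self a, neg_one_le_sin (p ^ 2)])
      (by linarith [neg_abs_le a, sin_le_one (q ^ 2)])
    exact ⟨z, hz, by linarith⟩
  choose f hf_mem hf_eq using root_on_arch
  have hf : Injective f := fun j k h =>
    Fin.ext (eq_of_mem_Icc_add_mul (by linarith [pi_pos]) (hf_mem j) (h ▸ hf_mem k))
  refine ⟨univ.image f, ?_, by simpa using hf_eq⟩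
  rw [Finset.card_image_of_injective _ hf, card_univ, Fintype.card_fin]
end

section
/- Let K = [−1, 1] × [−1, 1] × [−(1 + |a| + |b| + |c|), 1 + |a| + |b| + |c|] ⊆ ℝ³. Then F(K) ⊆ K, and for every point p ∈ ℝ³ the third iterate satisfies F³(p) ∈ K; hence K is a forward-invariant absorbing cuboid for F, and all orbits eventually lie inside a cuboid whose z-side has half-length 1 + |a| + |b| + |c|. -/
/-!
After one step the `y`-coordinate is a sine and after two steps so is the `x`-coordinate, since
`F` shifts `y` into `x`. On the slab `|x| ≤ 1, |y| ≤ 1` the triangle inequality bounds the new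
`z`-coordinate `a + b x + c y − sin(z²)` by `1 + |a| + |b| + |c|`, so `F` maps the whole slab,
and in particular `K`, into `K`; and `F² p` lies in the slab for every `p`.
-/

/-- The 3D sinusoidal map `F(x, y, z) = (y, sin z, a + b·x + c·y − sin(z²))`. -/
noncomputable def sinusoidalMap (a b c : ℝ) (p : ℝ × ℝ × ℝ) : ℝ × ℝ × ℝ :=
  (p.2.1, Real.sin p.2.2, a + b * p.1 + c * p.2.1 - Real.sin (p.2.2 ^ 2))

lemma abs_add_mul_add_mul_sub_sin_le {a b c x y : ℝ} (hx : |x| ≤ 1) (hy : |y| ≤ 1) (w : ℝ) :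
    |a + b * x + c * y - Real.sin w| ≤ 1 + |a| + |b| + |c| := by
  have hbx : |b * x| ≤ |b| := by
    simpa [abs_mul] using mul_le_mul_of_nonneg_left hx (abs_nonneg b)
  have hcy : |c * y| ≤ |c| := by
    simpa [abs_mul] using mul_le_mul_of_nonneg_left hy (abs_nonneg c)
  calc |a + b * x + c * y - Real.sin w|
      ≤ |a| + |b * x| + |c * y| + |Real.sin w| :=
        (abs_sub _ _).trans (add_le_add_left ((abs_add_le _ _).trans
          (add_le_add_left (abs_add_le _ _) _)) _)
    _ ≤ 1 + |a| + |b| + |c| := by linarith [Real.abs_sin_le_one w]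

lemma sinusoidalMap_mem_of_abs_le (a b c : ℝ) {q : ℝ × ℝ × ℝ} (hx : |q.1| ≤ 1)
    (hy : |q.2.1| ≤ 1) :
    sinusoidalMap a b c q ∈ Set.Icc (-1 : ℝ) 1 ×ˢ Set.Icc (-1 : ℝ) 1 ×ˢ
      Set.Icc (-(1 + |a| + |b| + |c|)) (1 + |a| + |b| + |c|) :=
  ⟨abs_le.mp hy, abs_le.mp (Real.abs_sin_le_one _),
    abs_le.mp (abs_add_mul_add_mul_sub_sin_le hx hy _)⟩

/-- Let `K = [−1, 1] × [−1, 1] × [−(1 + |a| + |b| + |c|), 1 + |a| + |b| + |c|]`.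
Then `F(K) ⊆ K`, and for every point `p ∈ ℝ³` the third iterate satisfies `F³(p) ∈ K`; hence
`K` is a forward-invariant absorbing cuboid for `F`. -/
theorem absorbing_cuboid (a b c : ℝ) (K : Set (ℝ × ℝ × ℝ))
    (hK : K = Set.Icc (-1 : ℝ) 1 ×ˢ Set.Icc (-1 : ℝ) 1 ×ˢ
      Set.Icc (-(1 + |a| + |b| + |c|)) (1 + |a| + |b| + |c|)) :
    Set.MapsTo (sinusoidalMap a b c) K K ∧
    ∀ p : ℝ × ℝ × ℝ, (sinusoidalMap a b c)^[3] p ∈ K := by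
  subst hK
  refine ⟨fun q hq => sinusoidalMap_mem_of_abs_le a b c (abs_le.mpr hq.1) (abs_le.mpr hq.2.1),
    fun p => ?_⟩
  rw [Function.iterate_succ_apply']
  exact sinusoidalMap_mem_of_abs_le a b c (Real.abs_sin_le_one _) (Real.abs_sin_le_one _)
end
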